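/- Let (W,S) be a Coxeter system, Q a word with δ(Q) = π, and let F and F' = (F \ {q}) ∪ {q'} be two adjacent facets of Δ(Q,π) with q to the left of q' in Q. Let t_q = w_q q w_q⁻¹ where w_q is the product of the letters of Q \ F strictly before q. Then for every position p of Q: r_{F'}(p) = t_q(r_F(p)) if p lies strictly between q and q' or p = q', and r_{F'}(p) = r_F(p) otherwise. -/

import Mathlib

open List

namespace SubwordComplex

variable {B : Type*} [DecidableEq B] [Inhabited B] {W : Type*} [Group W]
variable {M : CoxeterMatrix B} (cs : CoxeterSystem M W)

/-- The word formed by the letters of `Q` at positions not in `F`. -/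
def complement (Q : List B) (F : Finset ℕ) : List B :=
  ((Q.zipIdx.map Prod.swap).filter (fun p => p.1 ∉ F)).map Prod.snd

/-- `L` contains a reduced expression for `π` as a subword. -/
def ContainsReduced (L : List B) (π : W) : Prop :=
  ∃ L' : List B, L'.Sublist L ∧ cs.IsReduced L' ∧ cs.wordProd L' = π

/-- `F` is a face of the subword complex `Δ(Q, π)`. -/
def IsFace (Q : List B) (π : W) (F : Finset ℕ) : Prop :=
  F ⊆ Finset.range Q.length ∧ ContainsReduced cs (complement Q F) π

/-- `F` is a facet (maximal face) of the subword complex `Δ(Q, π)`. -/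
def IsFacet (Q : List B) (π : W) (F : Finset ℕ) : Prop :=
  IsFace cs Q π F ∧ ∀ F' : Finset ℕ, IsFace cs Q π F' → F ⊆ F' → F' = F

/-- `w₀` is the longest element. -/
def IsLongest (w₀ : W) : Prop := ∀ w : W, cs.length w ≤ cs.length w₀

/-- The Demazure product of a word. -/
noncomputable def demazure (Q : List B) : W :=
  Q.foldl (fun w i => if cs.length w < cs.length (w * cs.simple i) then w * cs.simple i
    else w) 1

/-- A reduced word for a Coxeter element: each generator appears exactly once. -/
def IsCoxeterWord (c : List B) : Prop := c.Nodup ∧ ∀ b : B, b ∈ c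

/-- The letter of the infinite word `c^∞` at position `i`. -/
def cInfLetter (c : List B) (i : ℕ) : B := c.getD (i % c.length) default

/-- `P` is the lexicographically first increasing list of positions in `c^∞` whose
associated word is a reduced word for `w`. -/
def IsSortingIndices (c : List B) (w : W) (P : List ℕ) : Prop :=
  P.Chain' (· < ·) ∧ cs.IsReduced (P.map (cInfLetter c)) ∧
    cs.wordProd (P.map (cInfLetter c)) = w ∧
    ∀ P' : List ℕ, P'.Chain' (· < ·) → cs.IsReduced (P'.map (cInfLetter c)) →
      cs.wordProd (P'.map (cInfLetter c)) = w → P = P' ∨ List.Lex (· < ·) P P'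

/-- `sw` is the `c`-sorting word of `w`. -/
def IsSortingWord (c : List B) (w : W) (sw : List B) : Prop :=
  ∃ P : List ℕ, IsSortingIndices cs c w P ∧ sw = P.map (cInfLetter c)

/-- One step of interchanging two adjacent commuting letters. -/
def CommStep (L L' : List B) : Prop :=
  ∃ (u v : List B) (a b : B),
    cs.simple a * cs.simple b = cs.simple b * cs.simple a ∧
    L = u ++ a :: b :: v ∧ L' = u ++ b :: a :: v

/-- Two words coincide up to commutations. -/
def CommEquiv (L L' : List B) : Prop := Relation.EqvGen (CommStep cs) L L'

/-- The (combinatorial model of the) root `w(α_s)`: a pair consisting of the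
reflection `w s w⁻¹` and a sign which is `true` if the root is positive. -/
noncomputable def rootPair (w : W) (s : B) : W × Bool :=
  (w * cs.simple s * w⁻¹, decide (cs.length w < cs.length (w * cs.simple s)))

/-- The negative of a root in the combinatorial model. -/
def negRoot (r : W × Bool) : W × Bool := (r.1, !r.2)

/-- The product of the letters of `Q \ F` occurring strictly before position `q`. -/
def prefixProd (Q : List B) (F : Finset ℕ) (q : ℕ) : W :=
  cs.wordProd (((Q.zipIdx.map Prod.swap).filter (fun p => p.1 ∉ F ∧ p.1 < q)).map Prod.snd)

/-- The root function `r_F` of a facet `F`, in the combinatorial model. -/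
noncomputable def rootF (Q : List B) (F : Finset ℕ) (q : ℕ) : W × Bool :=
  rootPair cs (prefixProd cs Q F q) (Q.getD q default)

/-! Write `P_G(k)` for the product of the letters of `Q` at the positions `i < k` outside `G`.
On any interval of positions where the complements of `F` and `F' = (F \ {q}) ∪ {q'}` agree,
the ratio `P_{F'}(k) P_F(k)⁻¹` does not depend on `k`. It is `1` up to `q`, jumps to
`w_q s_q w_q⁻¹ = t_q` at `q` and keeps that value up to `q'`. Beyond `q'` it equals its value
at the end of `Q`, which is `π π⁻¹ = 1`, because the complement of a facet is a word for `π`. -/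

lemma filter_mem_range_eq_of_sublist {n : ℕ} {E : List ℕ} (hE : E <+ range n) :
    (range n).filter (· ∈ E) = E := by
  have hsorted : E.Pairwise (· < ·) := pairwise_lt_range.sublist hE
  refine Perm.eq_of_pairwise' (pairwise_lt_range.filter _) hsorted ?_
  refine (perm_ext_iff_of_nodup (nodup_range.filter _) hsorted.nodup).2 fun i => ?_
  simpa using fun hi => mem_range.1 (hE.subset hi)

section

omit [DecidableEq B]

def prefixWord (Q : List B) (S : ℕ → Prop) [DecidablePred S] (k : ℕ) : List B :=
  ((range k).filter S).map (Q.getD · default)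

variable (Q : List B) (S T : ℕ → Prop) [DecidablePred S] [DecidablePred T]

lemma zipIdx_map_swap_eq_map_range :
    Q.zipIdx.map Prod.swap = (range Q.length).map fun i => (i, Q.getD i default) := by
  refine ext_getElem (by simp) fun i hi _ => ?_
  simp [getElem?_eq_getElem (by simpa using hi : i < Q.length)]

lemma map_snd_filter_zipIdx :
    ((Q.zipIdx.map Prod.swap).filter fun x => decide (S x.1)).map Prod.snd =
      prefixWord Q S Q.length := by
  simp [zipIdx_map_swap_eq_map_range, prefixWord, filter_map, Function.comp_def]

lemma prefixWord_and_lt (p k : ℕ) :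
    prefixWord Q (fun i => S i ∧ i < p) k = prefixWord Q S (min p k) := by
  unfold prefixWord
  rw [← Ico.zero_bot, ← Ico.zero_bot, min_comm, ← Ico.filter_lt, filter_filter]
  congr 1
  exact filter_congr fun i _ => by simp

variable {S T}

lemma prefixWord_succ (k : ℕ) :
    prefixWord Q S (k + 1) = prefixWord Q S k ++ if S k then [Q.getD k default] else [] := by
  by_cases h : S k <;> simp [prefixWord, range_succ, h]

lemma prefixWord_congr {k : ℕ} (h : ∀ i < k, S i ↔ T i) :
    prefixWord Q S k = prefixWord Q T k := by
  unfold prefixWord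
  congr 1
  exact filter_congr fun i hi => by simp [h i (mem_range.1 hi)]

lemma wordProd_prefixWord_mul_inv_eq {k l : ℕ} (hkl : k ≤ l)
    (h : ∀ i, k ≤ i → i < l → (S i ↔ T i)) :
    cs.wordProd (prefixWord Q S l) * (cs.wordProd (prefixWord Q T l))⁻¹ =
      cs.wordProd (prefixWord Q S k) * (cs.wordProd (prefixWord Q T k))⁻¹ := by
  induction l, hkl using Nat.le_induction with
  | base => rfl
  | succ l hkl ih =>
    simp only [prefixWord_succ, h l hkl (by omega), cs.wordProd_append,
      ← ih fun i hki hil => h i hki (by omega)]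
    group

lemma complement_eq_prefixWord (F : Finset ℕ) :
    complement Q F = prefixWord Q (· ∉ F) Q.length :=
  map_snd_filter_zipIdx Q (· ∉ F)

lemma prefixProd_eq_wordProd_prefixWord (F : Finset ℕ) (p : ℕ) :
    prefixProd cs Q F p = cs.wordProd (prefixWord Q (· ∉ F) (min p Q.length)) := by
  rw [prefixProd, map_snd_filter_zipIdx Q (fun i => i ∉ F ∧ i < p), prefixWord_and_lt]

-- The positions outside a reduced subword for `π` form a face containing `F`, hence equal to `F`.
lemma wordProd_complement_of_isFacet {Q : List B} {π : W} {F : Finset ℕ}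
    (hF : IsFacet cs Q π F) : cs.wordProd (complement Q F) = π := by
  obtain ⟨⟨hFQ, L, hL, hred, rfl⟩, hmax⟩ := hF
  rw [complement_eq_prefixWord, prefixWord] at hL
  obtain ⟨E, hE, rfl⟩ := sublist_map_iff.mp hL
  set F' := (Finset.range Q.length).filter (· ∉ E)
  have hcompl : complement Q F' = E.map (Q.getD · default) := by
    rw [complement_eq_prefixWord, prefixWord,
      ← filter_mem_range_eq_of_sublist (hE.trans filter_sublist)]
    congr 1
    exact filter_congr fun i hi => by simp [F', mem_range.1 hi]
  have hFF' : F ⊆ F' := fun i hi =>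
    Finset.mem_filter.2 ⟨hFQ hi, fun hiE => by simpa [hi] using hE.subset hiE⟩
  rw [← hmax F' ⟨Finset.filter_subset _ _, _, hcompl ▸ Sublist.refl _, hred, rfl⟩ hFF', hcompl]

lemma wordProd_prefixWord_flip {Q : List B} {π : W} {F : Finset ℕ} {q q' k : ℕ}
    (hq : q ∈ F) (hqq' : q < q') (hF : IsFacet cs Q π F)
    (hF' : IsFacet cs Q π (insert q' (F.erase q))) (hk : k ≤ Q.length) :
    cs.wordProd (prefixWord Q (· ∉ insert q' (F.erase q)) k) =
      (if q < k ∧ k ≤ q' then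
        cs.wordProd (prefixWord Q (· ∉ F) q) * cs.simple (Q.getD q default) *
          (cs.wordProd (prefixWord Q (· ∉ F) q))⁻¹
      else 1) * cs.wordProd (prefixWord Q (· ∉ F) k) := by
  have hagree : ∀ i, i ≠ q → i ≠ q' → (i ∉ insert q' (F.erase q) ↔ i ∉ F) :=
    fun i hiq hiq' => by simp [hiq, hiq']
  rw [← mul_inv_eq_iff_eq_mul]
  split_ifs with hk'
  · rw [wordProd_prefixWord_mul_inv_eq cs Q hk'.1 fun i hi hik => hagree i (by omega) (by omega),
      prefixWord_succ, prefixWord_succ,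
      prefixWord_congr Q fun i hi => hagree i (by omega) (by omega)]
    simp [hq, hqq'.ne, cs.wordProd_append]
  · rcases not_and_or.1 hk' with hkq | hq'k
    · rw [wordProd_prefixWord_mul_inv_eq cs Q (Nat.zero_le k)
        fun i _ hik => hagree i (by omega) (by omega)]
      simp [prefixWord]
    · rw [← wordProd_prefixWord_mul_inv_eq cs Q hk fun i hki _ => hagree i (by omega) (by omega),
        ← complement_eq_prefixWord, ← complement_eq_prefixWord,
        wordProd_complement_of_isFacet cs hF, wordProd_complement_of_isFacet cs hF', mul_inv_cancel]

end

theorem flip_root_function_update (Q : List B) (π : W)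
    (F : Finset ℕ) (q q' : ℕ) (hq : q ∈ F)
    (hqq' : q < q')
    (hF : IsFacet cs Q π F) (hF' : IsFacet cs Q π (insert q' (F.erase q)))
    (p : ℕ) :
    rootF cs Q (insert q' (F.erase q)) p =
      if q < p ∧ p ≤ q' then
        rootPair cs
          ((prefixProd cs Q F q * cs.simple (Q.getD q default) * (prefixProd cs Q F q)⁻¹) *
            prefixProd cs Q F p)
          (Q.getD p default)
      else rootF cs Q F p := by
  have hqn : q < Q.length := by simpa using hF.1.1 hq
  have hq'n : q' < Q.length := by simpa using hF'.1.1 (Finset.mem_insert_self q' _)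
  have hcond : (q < min p Q.length ∧ min p Q.length ≤ q') ↔ (q < p ∧ p ≤ q') := by omega
  simp only [rootF, prefixProd_eq_wordProd_prefixWord, min_eq_left hqn.le,
    wordProd_prefixWord_flip cs hq hqq' hF hF' (min_le_right p Q.length), hcond]
  split_ifs <;> simp only [one_mul]

end SubwordComplex
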